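/- arXiv:1503.02323 — 2 statements merged into one kernel-verified Lean document; each statement's English description precedes it below -/
import Mathlib

section
/- Let K be a field and 𝕐 ⊆ ℙ^{s−1}. The graded vanishing ideal I(𝕐) is a binomial ideal if and only if V(I(𝕐)) ∪ {[0]} is a submonoid of ℙ^{s−1} ∪ {[0]} under componentwise multiplication. -/
open MvPolynomial

noncomputable section

variable {K : Type} [Field K] {s : ℕ}

def IsBinomialIdeal {σ : Type} (I : Ideal (MvPolynomial σ K)) : Prop :=
  ∃ B : Set (MvPolynomial σ K),
    (∀ f ∈ B, ∃ a b : σ →₀ ℕ, f = monomial a 1 - monomial b 1) ∧ I = Ideal.span B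

def affineVanishingIdeal (Y : Set (Fin s → K)) : Ideal (MvPolynomial (Fin s) K) :=
  Ideal.span {f | ∀ α ∈ Y, eval α f = 0}

def affineZeroSet (I : Ideal (MvPolynomial (Fin s) K)) : Set (Fin s → K) :=
  {α | ∀ f ∈ I, eval α f = 0}

def projVanishingIdeal (Y : Set (Projectivization K (Fin s → K))) :
    Ideal (MvPolynomial (Fin s) K) :=
  Ideal.span {f | (∃ n, f.IsHomogeneous n) ∧
    ∀ (α : Fin s → K) (hα : α ≠ 0), Projectivization.mk K α hα ∈ Y → eval α f = 0}

def projZeroSet (I : Ideal (MvPolynomial (Fin s) K)) :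
    Set (Projectivization K (Fin s → K)) :=
  {p | ∀ f ∈ I, (∃ n, f.IsHomogeneous n) →
    ∀ (α : Fin s → K) (hα : α ≠ 0), Projectivization.mk K α hα = p → eval α f = 0}

def IsProjSubmonoid (Y : Set (Projectivization K (Fin s → K))) : Prop :=
  (∀ h1 : (1 : Fin s → K) ≠ 0, Projectivization.mk K 1 h1 ∈ Y) ∧
  ∀ (α β : Fin s → K) (hα : α ≠ 0) (hβ : β ≠ 0),
    Projectivization.mk K α hα ∈ Y → Projectivization.mk K β hβ ∈ Y →
    ∀ hab : α * β ≠ 0, Projectivization.mk K (α * β) hab ∈ Y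

def projTorus (K : Type) [Field K] (s : ℕ) : Set (Projectivization K (Fin s → K)) :=
  {p | ∀ (α : Fin s → K) (hα : α ≠ 0), Projectivization.mk K α hα = p → ∀ i, α i ≠ 0}

def IsTorusSubgroup (Y : Set (Projectivization K (Fin s → K))) : Prop :=
  Y ⊆ projTorus K s ∧ IsProjSubmonoid Y ∧
  ∀ (α : Fin s → K) (hα : α ≠ 0), Projectivization.mk K α hα ∈ Y →
    ∀ hinv : α⁻¹ ≠ 0, Projectivization.mk K α⁻¹ hinv ∈ Y

def IsLatticeIdeal (I : Ideal (MvPolynomial (Fin s) K)) : Prop :=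
  IsBinomialIdeal I ∧ ∀ (i : Fin s) (f : MvPolynomial (Fin s) K), X i * f ∈ I → f ∈ I

def IsGradedIdeal {σ : Type} (I : Ideal (MvPolynomial σ K)) : Prop :=
  ∀ f ∈ I, ∀ n, homogeneousComponent n f ∈ I

/-!
If `I(𝕐)` is spanned by binomials `t^a - t^b`, a point of the cone over `V(I(𝕐))` satisfies
`γ^a = γ^b` for each of them: when `deg a = deg b` the binomial is homogeneous, otherwise both
monomials lie in the graded ideal `I(𝕐)` and vanish at `γ`. These equations are preserved by
componentwise products and hold at `1`, so `V(I(𝕐)) ∪ {[0]}` is a monoid.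

Conversely, if the cone `M` over `V(I(𝕐))` is a monoid, every monomial `t^a` restricts to a
character `M →* K`. A homogeneous `f ∈ I(𝕐)` vanishes on `M`, i.e. gives a linear relation among
the characters of its monomials; by Dedekind's independence of characters two of them, `t^a` and
`t^b`, agree on `M`. Then `t^a - t^b ∈ I(𝕐)`, and subtracting a multiple of it from `f` shortens
its support, so induction writes `f` as a combination of binomials in `I(𝕐)`.
-/

section Monomials

variable {R σ : Type*} [CommSemiring R]

def evalMonomialHom (a : σ →₀ ℕ) : (σ → R) →* R where
  toFun γ := eval γ (monomial a 1)
  map_one' := by simp [eval_monomial]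
  map_mul' γ δ := by simp [eval_monomial, mul_pow, Finsupp.prod_mul]

@[simp]
lemma evalMonomialHom_apply (a : σ →₀ ℕ) (γ : σ → R) :
    evalMonomialHom a γ = eval γ (monomial a 1) := rfl

lemma eval_eq_sum_coeff_mul_evalMonomialHom (γ : σ → R) (f : MvPolynomial σ R) :
    eval γ f = ∑ a ∈ f.support, coeff a f * evalMonomialHom a γ := by
  rw [eval_eq]
  simp only [evalMonomialHom_apply, eval_monomial, one_mul, Finsupp.prod]

lemma MvPolynomial.IsHomogeneous.degree_eq_of_mem_support {f : MvPolynomial σ R} {n : ℕ}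
    (hf : f.IsHomogeneous n) {a : σ →₀ ℕ} (ha : a ∈ f.support) : a.degree = n := by
  rw [Finsupp.degree_eq_weight_one]
  exact hf (mem_support_iff.mp ha)

lemma MvPolynomial.IsHomogeneous.eval_smul {f : MvPolynomial σ R} {n : ℕ}
    (hf : f.IsHomogeneous n) (c : R) (x : σ → R) : eval (c • x) f = c ^ n * eval x f := by
  rw [eval_eq_sum_coeff_mul_evalMonomialHom, eval_eq_sum_coeff_mul_evalMonomialHom,
    Finset.mul_sum]
  refine Finset.sum_congr rfl fun a ha => ?_
  have hscale : evalMonomialHom a (c • x) = c ^ n * evalMonomialHom a x := by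
    simp only [evalMonomialHom_apply, eval_monomial, one_mul, Pi.smul_apply, smul_eq_mul, mul_pow,
      Finsupp.prod_mul]
    rw [← hf.degree_eq_of_mem_support ha, Finsupp.degree_apply, Finsupp.prod,
      Finset.prod_pow_eq_pow_sum]
  rw [hscale]
  ring

end Monomials

section Characters

variable {F σ : Type*} [Field F]

def vanishingBinomials (M : Set (σ → F)) (S : Set (σ →₀ ℕ)) : Set (MvPolynomial σ F) :=
  {g | ∃ a ∈ S, ∃ b ∈ S, g = monomial a 1 - monomial b 1 ∧ ∀ γ ∈ M, eval γ g = 0}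

theorem exists_evalMonomialHom_eq_of_forall_eval_eq_zero (M : Submonoid (σ → F))
    {f : MvPolynomial σ F} (hf0 : f ≠ 0) (hf : ∀ γ ∈ M, eval γ f = 0) :
    ∃ a ∈ f.support, ∃ b ∈ f.support, a ≠ b ∧
      ∀ γ ∈ M, evalMonomialHom a γ = evalMonomialHom b γ := by
  let χ : f.support → (M →* F) := fun a => (evalMonomialHom a).comp M.subtype
  by_contra! hne
  have hχ : Function.Injective χ := by
    intro a b hab
    by_contra h
    obtain ⟨γ, hγ, hne⟩ := hne a a.2 b b.2 (Subtype.coe_ne_coe.mpr h)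
    exact hne (DFunLike.congr_fun hab ⟨γ, hγ⟩)
  have hrel : ∑ a : f.support, coeff a.1 f • ⇑(χ a) = 0 := by
    funext γ
    have := hf γ γ.2
    rw [eval_eq_sum_coeff_mul_evalMonomialHom, ← Finset.sum_coe_sort] at this
    simpa [χ] using this
  obtain ⟨a, ha⟩ := support_nonempty.mpr hf0
  exact mem_support_iff.mp ha <| Fintype.linearIndependent_iff.mp
    ((linearIndependent_monoidHom M F).comp χ hχ) _ hrel ⟨a, ha⟩

lemma support_sub_smul_binomial_ssubset {f : MvPolynomial σ F} {a b : σ →₀ ℕ}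
    (ha : a ∈ f.support) (hb : b ∈ f.support) (hab : a ≠ b) :
    (f - coeff a f • (monomial a 1 - monomial b 1)).support ⊂ f.support := by
  classical
  set g := f - coeff a f • (monomial a 1 - monomial b 1)
  have hsub : g.support ⊆ f.support := by
    intro e he
    by_contra hef
    have hea : a ≠ e := fun h => hef (h ▸ ha)
    have heb : b ≠ e := fun h => hef (h ▸ hb)
    simp [g, coeff_monomial, hea, heb, notMem_support_iff.mp hef] at he
  refine (Finset.ssubset_iff_of_subset hsub).mpr ⟨a, ha, ?_⟩
  simp [g, coeff_monomial, hab.symm]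

theorem mem_span_vanishingBinomials (M : Submonoid (σ → F)) (S : Set (σ →₀ ℕ))
    (f : MvPolynomial σ F) (hfS : ↑f.support ⊆ S) (hf : ∀ γ ∈ M, eval γ f = 0) :
    f ∈ Submodule.span F (vanishingBinomials (M : Set (σ → F)) S) := by
  induction hn : f.support.card using Nat.strong_induction_on generalizing f with
  | _ n ih =>
  by_cases hf0 : f = 0
  · exact hf0 ▸ Submodule.zero_mem _
  obtain ⟨a, ha, b, hb, hab, hχ⟩ := exists_evalMonomialHom_eq_of_forall_eval_eq_zero M hf0 hf
  set β : MvPolynomial σ F := monomial a 1 - monomial b 1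
  have hβM : ∀ γ ∈ M, eval γ β = 0 := fun γ hγ => by
    simpa [β, sub_eq_zero] using hχ γ hγ
  have hssub := support_sub_smul_binomial_ssubset ha hb hab
  have hg := ih _ (hn ▸ Finset.card_lt_card hssub) (f - coeff a f • β)
    ((Finset.coe_subset.mpr hssub.subset).trans hfS)
    (fun γ hγ => by simp [hf γ hγ, hβM γ hγ]) rfl
  have hβ : β ∈ vanishingBinomials (M : Set (σ → F)) S := ⟨a, hfS ha, b, hfS hb, rfl, hβM⟩
  simpa only [sub_add_cancel] using
    Submodule.add_mem _ hg (Submodule.smul_mem _ (coeff a f) (Submodule.subset_span hβ))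

end Characters

section Projective

attribute [local instance] MvPolynomial.gradedAlgebra

lemma mk_mem_projZeroSet_iff (I : Ideal (MvPolynomial (Fin s) K)) {α : Fin s → K}
    (hα : α ≠ 0) :
    Projectivization.mk K α hα ∈ projZeroSet I ↔
      ∀ f ∈ I, (∃ n, f.IsHomogeneous n) → eval α f = 0 := by
  refine ⟨fun h f hf hhom => h f hf hhom α hα rfl, fun h f hf hhom β hβ hmk => ?_⟩
  obtain ⟨n, hn⟩ := hhom
  obtain ⟨c, rfl⟩ := (Projectivization.mk_eq_mk_iff K β α hβ hα).mp hmk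
  rw [Units.smul_def, hn.eval_smul, h f hf ⟨n, hn⟩, mul_zero]

lemma eval_eq_zero_of_mem_projVanishingIdeal {Y : Set (Projectivization K (Fin s → K))}
    {f : MvPolynomial (Fin s) K} (hf : f ∈ projVanishingIdeal Y) {α : Fin s → K} (hα : α ≠ 0)
    (hαY : Projectivization.mk K α hα ∈ Y) : eval α f = 0 := by
  have hker : projVanishingIdeal Y ≤ RingHom.ker (eval α) :=
    Ideal.span_le.mpr fun g hg => hg.2 α hα hαY
  exact hker hf

lemma subset_projZeroSet_projVanishingIdeal (Y : Set (Projectivization K (Fin s → K))) :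
    Y ⊆ projZeroSet (projVanishingIdeal Y) := fun _ hp _ hf _ _ hα hmk =>
  eval_eq_zero_of_mem_projVanishingIdeal hf hα (hmk ▸ hp)

lemma isGradedIdeal_projVanishingIdeal (Y : Set (Projectivization K (Fin s → K))) :
    IsGradedIdeal (projVanishingIdeal Y) := by
  have hI : (projVanishingIdeal Y).IsHomogeneous (homogeneousSubmodule (Fin s) K) :=
    Ideal.homogeneous_span _ _ fun _ hx => hx.1
  intro f hf n
  rw [← MvPolynomial.decomposition.decompose'_apply]
  exact hI n hf

lemma isHomogeneous_binomial {σ : Type*} {a b : σ →₀ ℕ} {d : ℕ} (ha : a.degree = d)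
    (hb : b.degree = d) : (monomial a (1 : K) - monomial b 1).IsHomogeneous d :=
  (isHomogeneous_monomial 1 ha).sub (isHomogeneous_monomial 1 hb)

lemma eval_monomial_eq_of_binomial_mem {σ : Type} {I : Ideal (MvPolynomial σ K)}
    (hI : IsGradedIdeal I) {a b : σ →₀ ℕ} (hab : monomial a 1 - monomial b 1 ∈ I) {α : σ → K}
    (hα : ∀ f ∈ I, (∃ n, f.IsHomogeneous n) → eval α f = 0) :
    eval α (monomial a 1) = eval α (monomial b 1) := by
  by_cases hdeg : a.degree = b.degree
  · rw [← sub_eq_zero, ← map_sub]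
    exact hα _ hab ⟨_, isHomogeneous_binomial hdeg rfl⟩
  have hcomp (e : σ →₀ ℕ) (n : ℕ) : homogeneousComponent n (monomial e (1 : K)) =
      if n = e.degree then monomial e 1 else 0 :=
    homogeneousComponent_of_mem <|
      (mem_homogeneousSubmodule _ _).mpr (isHomogeneous_monomial 1 rfl)
  have hmon (e : σ →₀ ℕ) (he : monomial e (1 : K) ∈ I) : eval α (monomial e 1) = 0 :=
    hα _ he ⟨_, isHomogeneous_monomial 1 rfl⟩
  have ha := hI _ hab a.degree
  have hb := hI _ hab b.degree
  simp only [map_sub, hcomp, if_pos, if_neg hdeg, if_neg (Ne.symm hdeg), sub_zero, zero_sub,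
    neg_mem_iff] at ha hb
  rw [hmon a ha, hmon b hb]

lemma eval_eq_zero_of_isBinomialIdeal {σ : Type} {I : Ideal (MvPolynomial σ K)}
    (hB : IsBinomialIdeal I) {γ : σ → K}
    (hγ : ∀ a b, monomial a 1 - monomial b 1 ∈ I → evalMonomialHom a γ = evalMonomialHom b γ)
    {f : MvPolynomial σ K} (hf : f ∈ I) : eval γ f = 0 := by
  obtain ⟨B, hBbin, rfl⟩ := hB
  have hker : Ideal.span B ≤ RingHom.ker (eval γ) := by
    refine Ideal.span_le.mpr fun g hg => ?_
    obtain ⟨a, b, rfl⟩ := hBbin g hg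
    simpa [sub_eq_zero] using hγ a b (Ideal.subset_span hg)
  exact hker hf

theorem isProjSubmonoid_projZeroSet {I : Ideal (MvPolynomial (Fin s) K)}
    (hI : IsGradedIdeal I) (hB : IsBinomialIdeal I) : IsProjSubmonoid (projZeroSet I) := by
  refine ⟨fun h1 => (mk_mem_projZeroSet_iff I h1).mpr fun f hf _ =>
    eval_eq_zero_of_isBinomialIdeal hB (fun _ _ _ => by rw [map_one, map_one]) hf, ?_⟩
  intro α β hα hβ hαV hβV hαβ
  rw [mk_mem_projZeroSet_iff] at hαV hβV ⊢
  refine fun f hf _ => eval_eq_zero_of_isBinomialIdeal hB (fun a b hab => ?_) hf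
  simp only [map_mul, evalMonomialHom_apply, eval_monomial_eq_of_binomial_mem hI hab hαV,
    eval_monomial_eq_of_binomial_mem hI hab hβV]

/-- The paper's monoid `V ∪ {[0]}`, realised as the affine cone over `V`. -/
def IsProjSubmonoid.cone {V : Set (Projectivization K (Fin s → K))} (hV : IsProjSubmonoid V) :
    Submonoid (Fin s → K) where
  carrier := {γ | γ = 0 ∨ ∃ h : γ ≠ 0, Projectivization.mk K γ h ∈ V}
  one_mem' := by
    by_cases h1 : (1 : Fin s → K) = 0
    · exact Or.inl h1
    · exact Or.inr ⟨h1, hV.1 h1⟩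
  mul_mem' := by
    rintro γ δ (rfl | ⟨hγ, hγV⟩) hδ
    · exact Or.inl (zero_mul δ)
    rcases hδ with rfl | ⟨hδ, hδV⟩
    · exact Or.inl (mul_zero γ)
    by_cases h : γ * δ = 0
    · exact Or.inl h
    · exact Or.inr ⟨h, hV.2 γ δ hγ hδ hγV hδV h⟩

theorem isBinomialIdeal_projVanishingIdeal (hs : 0 < s)
    {Y : Set (Projectivization K (Fin s → K))}
    (hV : IsProjSubmonoid (projZeroSet (projVanishingIdeal Y))) :
    IsBinomialIdeal (projVanishingIdeal Y) := by
  set I := projVanishingIdeal Y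
  have h1 : (1 : Fin s → K) ≠ 0 := fun h => one_ne_zero (congrFun h ⟨0, hs⟩)
  refine ⟨{g | (∃ a b : Fin s →₀ ℕ, g = monomial a 1 - monomial b 1) ∧ g ∈ I}, fun g hg => hg.1,
    le_antisymm ?_ (Ideal.span_le.mpr fun g hg => hg.2)⟩
  refine Ideal.span_le.mpr fun f ⟨⟨d, hd⟩, hfY⟩ => ?_
  have hfI : f ∈ I := Ideal.subset_span ⟨⟨d, hd⟩, hfY⟩
  have hfV : ∀ (γ : Fin s → K) (hγ : γ ≠ 0),
      Projectivization.mk K γ hγ ∈ projZeroSet I → eval γ f = 0 :=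
    fun γ hγ hγV => hγV f hfI ⟨d, hd⟩ γ hγ rfl
  -- at the origin, `f(0) = f(0 • 1) = 0 ^ d * f(1)` and `[1] ∈ V(I)`
  have hfcone : ∀ γ ∈ hV.cone, eval γ f = 0 := by
    rintro γ (rfl | ⟨hγ, hγV⟩)
    · rw [← zero_smul K (1 : Fin s → K), hd.eval_smul, hfV 1 h1 (hV.1 h1),
        mul_zero]
    · exact hfV γ hγ hγV
  have hfS : ↑f.support ⊆ {a : Fin s →₀ ℕ | a.degree = d} := fun _ => hd.degree_eq_of_mem_support
  refine Submodule.span_le_restrictScalars K _ _ <|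
    Submodule.span_mono ?_ (mem_span_vanishingBinomials hV.cone _ f hfS hfcone)
  rintro g ⟨a, ha, b, hb, rfl, hgcone⟩
  refine ⟨⟨a, b, rfl⟩, Ideal.subset_span ⟨⟨d, isHomogeneous_binomial ha hb⟩, fun γ hγ hγY => ?_⟩⟩
  exact hgcone γ (Or.inr ⟨hγ, subset_projZeroSet_projVanishingIdeal Y hγY⟩)

end Projective

theorem classification_binomial (hs : 0 < s)
    (Y : Set (Projectivization K (Fin s → K))) :
    IsBinomialIdeal (projVanishingIdeal Y) ↔
      IsProjSubmonoid (projZeroSet (projVanishingIdeal Y)) :=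
  ⟨isProjSubmonoid_projZeroSet (isGradedIdeal_projVanishingIdeal Y),
    isBinomialIdeal_projVanishingIdeal hs⟩
end
end

section
/- Let K be a field and Y ⊆ Kˢ. The vanishing ideal I(Y) is a binomial ideal if and only if V(I(Y)) is a submonoid of Kˢ under componentwise multiplication. -/
/-!
For a submonoid `M` of `Kˢ`, a monomial `t^a` restricts to a character `M → K`, and a polynomial
vanishes on `M` exactly when, in the expansion `∑ c_a • t^a`, the coefficients of each class of
monomials inducing the same character sum to zero (Dedekind's independence of characters). Such a
polynomial is therefore a combination of binomials `t^a - t^b` whose monomials induce the same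
character, i.e. binomials vanishing on `M`. Applied to `M = V(I(Y))`, which satisfies
`I(V(I(Y))) = I(Y)`, this makes `I(Y)` binomial. Conversely, the zero set of binomials is closed
under componentwise products and contains `(1, …, 1)`.
-/

open MvPolynomial

noncomputable section

variable {K : Type} [Field K] {s : ℕ}

theorem Finset.sum_smul_comp_eq_sum_image {ι β R V : Type*} [DecidableEq β] [Semiring R]
    [AddCommMonoid V] [Module R V] (t : Finset ι) (c : ι → R) (φ : ι → β) (v : β → V) :
    ∑ i ∈ t, c i • v (φ i) = ∑ y ∈ t.image φ, (∑ i ∈ t with φ i = y, c i) • v y := by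
  rw [← sum_fiberwise_of_maps_to (t := t.image φ) fun i hi => mem_image_of_mem φ hi]
  refine sum_congr rfl fun y _ => ?_
  rw [sum_smul]
  exact sum_congr rfl fun i hi => by rw [(mem_filter.1 hi).2]

lemma affineVanishingIdeal_eq_vanishingIdeal (Y : Set (Fin s → K)) :
    affineVanishingIdeal Y = vanishingIdeal K Y := by
  have hcarrier : {f : MvPolynomial (Fin s) K | ∀ α ∈ Y, eval α f = 0} = vanishingIdeal K Y := by
    ext f
    simp
  rw [affineVanishingIdeal, hcarrier, Ideal.span_eq]

lemma affineZeroSet_eq_zeroLocus (I : Ideal (MvPolynomial (Fin s) K)) :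
    affineZeroSet I = zeroLocus K I := by
  ext α
  simp [affineZeroSet]

lemma vanishingIdeal_zeroLocus_vanishingIdeal {σ : Type*} (V : Set (σ → K)) :
    vanishingIdeal K (zeroLocus K (vanishingIdeal K V)) = vanishingIdeal K V :=
  zeroLocus_vanishingIdeal_galoisConnection.u_l_u_eq_u (V : (Set (σ → K))ᵒᵈ)

section Binomial

variable {σ : Type}

lemma eval_monomial_one_mul (α β : σ → K) (a : σ →₀ ℕ) :
    eval (α * β) (monomial a (1 : K)) = eval α (monomial a 1) * eval β (monomial a 1) := by
  simp [eval_monomial, Finsupp.prod, Finset.prod_mul_distrib, mul_pow]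

lemma eval_binomial_eq_zero_iff (α : σ → K) (a b : σ →₀ ℕ) :
    eval α (monomial a 1 - monomial b 1) = 0 ↔ eval α (monomial a 1) = eval α (monomial b 1) := by
  rw [map_sub, sub_eq_zero]

def IsBinomialIdeal.zeroLocusSubmonoid {I : Ideal (MvPolynomial σ K)} (hI : IsBinomialIdeal I) :
    Submonoid (σ → K) where
  carrier := zeroLocus K I
  one_mem' := by
    obtain ⟨B, hB, rfl⟩ := hI
    rw [zeroLocus_span]
    intro g hg
    obtain ⟨a, b, rfl⟩ := hB g hg
    simp [eval_monomial]
  mul_mem' {α β} hα hβ := by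
    obtain ⟨B, hB, rfl⟩ := hI
    rw [zeroLocus_span] at hα hβ ⊢
    intro g hg
    have hαg := hα g hg
    have hβg := hβ g hg
    obtain ⟨a, b, rfl⟩ := hB g hg
    rw [aeval_eq_eval, eval_binomial_eq_zero_iff] at hαg hβg ⊢
    rw [eval_monomial_one_mul, eval_monomial_one_mul, hαg, hβg]

variable (M : Submonoid (σ → K))

def monomialChar (a : σ →₀ ℕ) : M →* K where
  toFun α := eval (α : σ → K) (monomial a 1)
  map_one' := by simp [eval_monomial]
  map_mul' α β := by
    simp only [Submonoid.coe_mul, eval_monomial_one_mul]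

variable {M}

lemma mem_vanishingIdeal_iff_forall_eval_eq_zero {f : MvPolynomial σ K} :
    f ∈ vanishingIdeal K (M : Set (σ → K)) ↔ ∀ α : M, eval (α : σ → K) f = 0 := by
  simp

lemma binomial_mem_vanishingIdeal {a b : σ →₀ ℕ} (h : monomialChar M a = monomialChar M b) :
    monomial a 1 - monomial b 1 ∈ vanishingIdeal K (M : Set (σ → K)) :=
  mem_vanishingIdeal_iff_forall_eval_eq_zero.2 fun α =>
    (eval_binomial_eq_zero_iff _ a b).2 (DFunLike.congr_fun h α)

open Classical in
lemma sum_coeff_fiber_monomialChar_eq_zero {f : MvPolynomial σ K}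
    (hf : f ∈ vanishingIdeal K (M : Set (σ → K))) :
    ∀ ψ ∈ f.support.image (monomialChar M),
      ∑ b ∈ f.support with monomialChar M b = ψ, coeff b f = 0 := by
  have hcomb : ∑ b ∈ f.support, coeff b f • ⇑(monomialChar M b) = 0 := by
    funext α
    have hα := mem_vanishingIdeal_iff_forall_eval_eq_zero.1 hf α
    rw [eval_eq] at hα
    simpa [monomialChar, eval_monomial, Finsupp.prod] using hα
  rw [Finset.sum_smul_comp_eq_sum_image (v := fun ψ : M →* K => ⇑ψ)] at hcomb
  exact linearIndependent_iff'.1 (linearIndependent_monoidHom M K) _ _ hcomb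

theorem isBinomialIdeal_vanishingIdeal : IsBinomialIdeal (vanishingIdeal K (M : Set (σ → K))) := by
  classical
  refine ⟨{g | (∃ a b : σ →₀ ℕ, g = monomial a 1 - monomial b 1) ∧
      g ∈ vanishingIdeal K (M : Set (σ → K))}, fun g hg => hg.1,
    le_antisymm (fun f hf => ?_) (Ideal.span_le.2 fun g hg => hg.2)⟩
  set χ := monomialChar M
  set rep := fun b => Function.invFun χ (χ b)
  have hrep : ∀ b, χ (rep b) = χ b := fun b => Function.invFun_eq ⟨b, rfl⟩
  have hsum_rep : ∑ b ∈ f.support, coeff b f • monomial (rep b) (1 : K) = 0 := by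
    rw [Finset.sum_smul_comp_eq_sum_image (v := fun ψ => monomial (Function.invFun χ ψ) (1 : K))]
    refine Finset.sum_eq_zero fun ψ hψ => ?_
    rw [sum_coeff_fiber_monomialChar_eq_zero hf ψ hψ, zero_smul]
  have hf_eq : f = ∑ b ∈ f.support, coeff b f • (monomial b 1 - monomial (rep b) 1) := by
    simp only [smul_sub, Finset.sum_sub_distrib, hsum_rep, sub_zero]
    simpa only [smul_monomial, smul_eq_mul, mul_one] using f.as_sum
  rw [hf_eq]
  refine Ideal.sum_mem _ fun b _ => ?_
  rw [smul_eq_C_mul]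
  exact Ideal.mul_mem_left _ _
    (Ideal.subset_span ⟨⟨b, rep b, rfl⟩, binomial_mem_vanishingIdeal (hrep b).symm⟩)

end Binomial

theorem classification_binomial_affine (Y : Set (Fin s → K)) :
    IsBinomialIdeal (affineVanishingIdeal Y) ↔
      ((1 : Fin s → K) ∈ affineZeroSet (affineVanishingIdeal Y) ∧
        ∀ a ∈ affineZeroSet (affineVanishingIdeal Y),
          ∀ b ∈ affineZeroSet (affineVanishingIdeal Y),
            a * b ∈ affineZeroSet (affineVanishingIdeal Y)) := by
  rw [affineVanishingIdeal_eq_vanishingIdeal, affineZeroSet_eq_zeroLocus]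
  constructor
  · intro hY
    exact ⟨hY.zeroLocusSubmonoid.one_mem, fun a ha b hb => hY.zeroLocusSubmonoid.mul_mem ha hb⟩
  · rintro ⟨h_one, h_mul⟩
    let M : Submonoid (Fin s → K) :=
      ⟨⟨zeroLocus K (vanishingIdeal K Y), fun ha hb => h_mul _ ha _ hb⟩, h_one⟩
    rw [← vanishingIdeal_zeroLocus_vanishingIdeal]
    exact isBinomialIdeal_vanishingIdeal (M := M)
end
end
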